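/- Solution of the orthogonal Procrustes problem: for matrices V, W ∈ ℝ^{N×r} with V^T W having singular value decomposition V^T W = U Σ Z^T (U, Z ∈ ℝ^{r×r} orthogonal, Σ diagonal with nonnegative entries), the orthogonal matrix S = U Z^T minimizes ‖V S − W‖_F over all orthogonal matrices S ∈ ℝ^{r×r}, when V has orthonormal columns. -/
import Mathlib

noncomputable def frobNorm {N r : ℕ} (A : Matrix (Fin N) (Fin r) ℝ) : ℝ :=
  Real.sqrt (∑ i, ∑ j, (A i j) ^ 2)

open Matrix

lemma sum_mul_eq_trace {N r : ℕ} (A B : Matrix (Fin N) (Fin r) ℝ) :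
    ∑ i, ∑ j, A i j * B i j = (Aᵀ * B).trace := by
  rw [Matrix.trace]
  simp only [Matrix.diag, Matrix.mul_apply, Matrix.transpose_apply]
  rw [Finset.sum_comm]

theorem orthogonal_procrustes {N r : ℕ}
    (V W : Matrix (Fin N) (Fin r) ℝ)
    (U Z : Matrix (Fin r) (Fin r) ℝ) (σ : Fin r → ℝ)
    (hV : V.transpose * V = 1)
    (hU : U.transpose * U = 1) (hZ : Z.transpose * Z = 1)
    (hσ : ∀ i, 0 ≤ σ i)
    (hSVD : V.transpose * W = U * Matrix.diagonal σ * Z.transpose) :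
    ∀ S : Matrix (Fin r) (Fin r) ℝ, S.transpose * S = 1 →
      frobNorm (V * (U * Z.transpose) - W) ≤ frobNorm (V * S - W) := by
  intro S hS
  have hUU : U * Uᵀ = 1 := mul_eq_one_comm.mp hU
  have hZZ : Z * Zᵀ = 1 := mul_eq_one_comm.mp hZ
  -- the candidate
  set S₀ : Matrix (Fin r) (Fin r) ℝ := U * Zᵀ with hS₀def
  have hS₀ : S₀ᵀ * S₀ = 1 := by
    rw [hS₀def, Matrix.transpose_mul, Matrix.transpose_transpose]
    rw [show Z * Uᵀ * (U * Zᵀ) = Z * ((Uᵀ * U) * Zᵀ) by simp only [Matrix.mul_assoc],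
      hU, Matrix.one_mul, hZZ]
  -- expansion of the squared norm
  have key : ∀ T : Matrix (Fin r) (Fin r) ℝ, Tᵀ * T = 1 →
      ∑ i, ∑ j, ((V * T - W) i j) ^ 2
        = (r : ℝ) - 2 * (Tᵀ * (Vᵀ * W)).trace + ∑ i, ∑ j, (W i j) ^ 2 := by
    intro T hT
    have e : (V * T)ᵀ * (V * T) = 1 := by
      rw [Matrix.transpose_mul]
      rw [show Tᵀ * Vᵀ * (V * T) = Tᵀ * ((Vᵀ * V) * T) by simp only [Matrix.mul_assoc],
        hV, Matrix.one_mul, hT]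
    have h1 : ∑ i, ∑ j, ((V * T) i j) * ((V * T) i j) = (r : ℝ) := by
      rw [sum_mul_eq_trace, e, Matrix.trace_one]
      simp
    have h2 : ∑ i, ∑ j, ((V * T) i j) * W i j = (Tᵀ * (Vᵀ * W)).trace := by
      rw [sum_mul_eq_trace, Matrix.transpose_mul, Matrix.mul_assoc]
    calc ∑ i, ∑ j, ((V * T - W) i j) ^ 2
        = ∑ i, ∑ j, (((V * T) i j) * ((V * T) i j)
            - 2 * (((V * T) i j) * W i j) + (W i j) ^ 2) := by
          apply Finset.sum_congr rfl; intro i _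
          apply Finset.sum_congr rfl; intro j _
          simp only [Matrix.sub_apply]; ring
      _ = (∑ i, ∑ j, ((V * T) i j) * ((V * T) i j))
            - 2 * (∑ i, ∑ j, ((V * T) i j) * W i j) + ∑ i, ∑ j, (W i j) ^ 2 := by
          simp only [Finset.sum_add_distrib, Finset.sum_sub_distrib, Finset.mul_sum]
      _ = (r : ℝ) - 2 * (Tᵀ * (Vᵀ * W)).trace + ∑ i, ∑ j, (W i j) ^ 2 := by
          rw [h1, h2]
  -- trace formula
  have traceT : ∀ T : Matrix (Fin r) (Fin r) ℝ,
      (Tᵀ * (Vᵀ * W)).trace = ∑ i, (Zᵀ * Tᵀ * U) i i * σ i := by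
    intro T
    rw [hSVD]
    rw [show Tᵀ * (U * Matrix.diagonal σ * Zᵀ) = (Tᵀ * U * Matrix.diagonal σ) * Zᵀ by
      simp only [Matrix.mul_assoc]]
    rw [Matrix.trace_mul_comm]
    rw [show Zᵀ * (Tᵀ * U * Matrix.diagonal σ) = (Zᵀ * Tᵀ * U) * Matrix.diagonal σ by
      simp only [Matrix.mul_assoc]]
    rw [Matrix.trace]
    apply Finset.sum_congr rfl; intro i _
    simp [Matrix.diag, Matrix.mul_diagonal]
  -- bound for general orthogonal S
  set M : Matrix (Fin r) (Fin r) ℝ := Zᵀ * Sᵀ * U with hMdef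
  have hMM : M * Mᵀ = 1 := by
    rw [hMdef, Matrix.transpose_mul, Matrix.transpose_mul, Matrix.transpose_transpose,
      Matrix.transpose_transpose]
    rw [show Zᵀ * Sᵀ * U * (Uᵀ * (S * Z)) = Zᵀ * (Sᵀ * ((U * Uᵀ) * (S * Z))) by
      simp only [Matrix.mul_assoc], hUU, Matrix.one_mul]
    rw [show Zᵀ * (Sᵀ * (S * Z)) = Zᵀ * ((Sᵀ * S) * Z) by simp only [Matrix.mul_assoc],
      hS, Matrix.one_mul, hZ]
  have hdiag : ∀ i, M i i ≤ 1 := by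
    intro i
    have hrow : ∑ j, M i j * M i j = 1 := by
      have := congrFun (congrFun hMM i) i
      simp only [Matrix.mul_apply, Matrix.transpose_apply, Matrix.one_apply_eq] at this
      exact this
    have hle : M i i * M i i ≤ 1 := by
      rw [← hrow]
      exact Finset.single_le_sum (f := fun j => M i j * M i j)
        (fun j _ => mul_self_nonneg _) (Finset.mem_univ i)
    nlinarith
  have hbound : (Sᵀ * (Vᵀ * W)).trace ≤ ∑ i, σ i := by
    rw [traceT]
    apply Finset.sum_le_sum
    intro i _
    calc M i i * σ i ≤ 1 * σ i := mul_le_mul_of_nonneg_right (hdiag i) (hσ i)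
      _ = σ i := one_mul _
  -- value at S₀
  have hMS₀ : Zᵀ * S₀ᵀ * U = 1 := by
    rw [hS₀def, Matrix.transpose_mul, Matrix.transpose_transpose]
    rw [show Zᵀ * (Z * Uᵀ) * U = (Zᵀ * Z) * (Uᵀ * U) by simp only [Matrix.mul_assoc],
      hZ, hU, Matrix.one_mul]
  have hS₀trace : (S₀ᵀ * (Vᵀ * W)).trace = ∑ i, σ i := by
    rw [traceT, hMS₀]
    apply Finset.sum_congr rfl; intro i _
    simp
  -- conclude
  unfold frobNorm
  apply Real.sqrt_le_sqrt
  rw [key S hS, key S₀ hS₀, hS₀trace]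
  linarith [hbound]
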